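/- arXiv:2203.00178 — 6 statements merged into one kernel-verified Lean document; each statement's English description precedes it below -/
import Mathlib

section
/- For every c₁ with 0 < c₁ < 1 there exists T₁ > 0 such that whenever (t,x,τ,ξ) ∈ ℝ × ℝⁿ × ℝ × ℝⁿ satisfies p(t,x,τ,ξ) = 0 and |t| ≥ T₁, one has |2τ − ∂_τ p(t,x,τ,ξ)| ≤ c₁|τ|; in particular τ·∂_τ p(t,x,τ,ξ) ≥ (2 − c₁)τ², so τ and ∂_τ p(t,x,τ,ξ) have the same sign. -/
open Real

noncomputable section

/-- `ℝⁿ` as a Euclidean space. -/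
abbrev En (n : ℕ) := EuclideanSpace ℝ (Fin n)

/-- The Japanese bracket `⟨t⟩ = (1+t²)^{1/2}`. -/
def jap (t : ℝ) : ℝ := Real.sqrt (1 + t ^ 2)

/-- Lemma 2.5 of the paper.  For every `0 < c₁ < 1` there is `T₁ > 0` such
that if `p(t,x,τ,ξ) = 0` and `|t| ≥ T₁` then `|2τ − ∂_τ p| ≤ c₁|τ|`, and in particular
`τ·∂_τ p ≥ (2 − c₁)τ²`, so `τ` and `∂_τ p` have the same sign. -/
theorem stmt0 (n : ℕ) (hn : 1 ≤ n) (μ C c₀ : ℝ) (hμ : 0 < μ) (hC : 0 < C) (hc₀ : 0 < c₀)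
    (q₀ : En n → En n → ℝ) (q : ℝ → En n → ℝ → En n → ℝ)
    (hq₀smooth : ContDiff ℝ (⊤ : ℕ∞) (fun v : En n × En n => q₀ v.1 v.2))
    (hq₀ell : ∀ x ξ, c₀ * ‖ξ‖ ^ 2 ≤ q₀ x ξ)
    (hqsmooth : ContDiff ℝ (⊤ : ℕ∞) (fun v : ℝ × En n × ℝ × En n => q v.1 v.2.1 v.2.2.1 v.2.2.2))
    (hq : ∀ t x τ ξ, |q t x τ ξ| ≤ C * jap t ^ (-1 - μ) * (τ ^ 2 + ‖ξ‖ ^ 2))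
    (hdτq : ∀ t x τ ξ, |deriv (fun σ => q t x σ ξ) τ| ≤ C * jap t ^ (-1 - μ) * (|τ| + ‖ξ‖))
    (p : ℝ → En n → ℝ → En n → ℝ)
    (hp : ∀ t x τ ξ, p t x τ ξ = τ ^ 2 - q₀ x ξ + q t x τ ξ)
    (c₁ : ℝ) (hc₁ : 0 < c₁) (hc₁' : c₁ < 1) :
    ∃ T₁ > (0 : ℝ), ∀ t x τ ξ, p t x τ ξ = 0 → T₁ ≤ |t| →
      |2 * τ - deriv (fun σ => p t x σ ξ) τ| ≤ c₁ * |τ| ∧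
      (2 - c₁) * τ ^ 2 ≤ τ * deriv (fun σ => p t x σ ξ) τ := by
  set K : ℝ := Real.sqrt ((2 + c₀) / c₀) with hKdef
  have hK0 : 0 ≤ K := Real.sqrt_nonneg _
  have hKsq : K ^ 2 = (2 + c₀) / c₀ := Real.sq_sqrt (by positivity)
  have h1K : (0:ℝ) < 1 + K := by linarith
  set ε : ℝ := min (c₀ / (2 * C)) (c₁ / (C * (1 + K))) with hεdef
  have hε : 0 < ε := lt_min (by positivity) (by positivity)
  have hεc₀ : C * ε ≤ c₀ / 2 := by
    have h : ε ≤ c₀ / (2 * C) := min_le_left _ _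
    have h2 : C * ε ≤ C * (c₀ / (2 * C)) := mul_le_mul_of_nonneg_left h hC.le
    have h3 : C * (c₀ / (2 * C)) = c₀ / 2 := by field_simp
    linarith
  have hεc₁ : C * ε * (1 + K) ≤ c₁ := by
    have h : ε ≤ c₁ / (C * (1 + K)) := min_le_right _ _
    have h2 : C * ε ≤ C * (c₁ / (C * (1 + K))) := mul_le_mul_of_nonneg_left h hC.le
    have h3 : C * ε * (1 + K) ≤ C * (c₁ / (C * (1 + K))) * (1 + K) :=
      mul_le_mul_of_nonneg_right h2 h1K.le
    have h4 : C * (c₁ / (C * (1 + K))) * (1 + K) = c₁ := by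
      field_simp
    linarith
  refine ⟨ε ^ (-(1 + μ)⁻¹), Real.rpow_pos_of_pos hε _, ?_⟩
  intro t x τ ξ hp0 hT
  set T₁ : ℝ := ε ^ (-(1 + μ)⁻¹) with hT₁def
  have hT₁pos : 0 < T₁ := Real.rpow_pos_of_pos hε _
  have hjap : T₁ ≤ jap t := by
    refine hT.trans ?_
    rw [jap]
    have habs : |t| = Real.sqrt (t ^ 2) := (Real.sqrt_sq_eq_abs t).symm
    rw [habs]
    exact Real.sqrt_le_sqrt (by linarith)
  set A : ℝ := jap t ^ (-1 - μ) with hAdef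
  have hjap0 : 0 < jap t := lt_of_lt_of_le hT₁pos hjap
  have hA0 : 0 ≤ A := Real.rpow_nonneg hjap0.le _
  have hAε : A ≤ ε := by
    have h1 : A ≤ T₁ ^ (-1 - μ) :=
      Real.rpow_le_rpow_of_nonpos hT₁pos hjap (by linarith)
    have h1μ : (1 + μ) ≠ 0 := by positivity
    have h2 : T₁ ^ (-1 - μ) = ε := by
      rw [hT₁def, ← Real.rpow_mul hε.le,
        show (-(1 + μ)⁻¹) * (-1 - μ) = (1 + μ)⁻¹ * (1 + μ) by ring,
        inv_mul_cancel₀ h1μ, Real.rpow_one]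
    linarith
  have hCA : C * A ≤ C * ε := mul_le_mul_of_nonneg_left hAε hC.le
  have hdq : Differentiable ℝ (fun σ => q t x σ ξ) := by
    have hmap : ContDiff ℝ (⊤ : ℕ∞) (fun σ : ℝ => ((t, x, σ, ξ) : ℝ × En n × ℝ × En n)) :=
      contDiff_const.prodMk (contDiff_const.prodMk (contDiff_id.prodMk contDiff_const))
    exact (hqsmooth.comp hmap).differentiable (by simp)
  set d : ℝ := deriv (fun σ => q t x σ ξ) τ with hddef
  have hderiv : deriv (fun σ => p t x σ ξ) τ = 2 * τ + d := by
    have heq : (fun σ => p t x σ ξ) = fun σ => σ ^ 2 - q₀ x ξ + q t x σ ξ :=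
      funext fun σ => hp t x σ ξ
    rw [heq]
    have ha : HasDerivAt (fun σ : ℝ => σ ^ 2 - q₀ x ξ) (2 * τ) τ := by
      simpa using (hasDerivAt_pow 2 τ).sub_const (q₀ x ξ)
    have hb : HasDerivAt (fun σ : ℝ => q t x σ ξ) d τ := (hdq τ).hasDerivAt
    exact (ha.add hb).deriv
  have hnn : (0:ℝ) ≤ τ ^ 2 + ‖ξ‖ ^ 2 := by positivity
  have hqb : |q t x τ ξ| ≤ C * ε * (τ ^ 2 + ‖ξ‖ ^ 2) := by
    have h := hq t x τ ξ
    rw [← hAdef] at h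
    exact h.trans (mul_le_mul_of_nonneg_right hCA hnn)
  have hq0 : q₀ x ξ = τ ^ 2 + q t x τ ξ := by
    rw [hp t x τ ξ] at hp0; linarith
  have hell := hq₀ell x ξ
  have hξτ : ‖ξ‖ ^ 2 ≤ K ^ 2 * τ ^ 2 := by
    have hqup : q t x τ ξ ≤ c₀ / 2 * (τ ^ 2 + ‖ξ‖ ^ 2) :=
      le_trans (le_abs_self _) (hqb.trans (mul_le_mul_of_nonneg_right hεc₀ hnn))
    rw [hKsq, div_mul_eq_mul_div, le_div_iff₀ hc₀]
    nlinarith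
  have hξτ' : ‖ξ‖ ≤ K * |τ| := by
    have hsq : ‖ξ‖ ^ 2 ≤ (K * |τ|) ^ 2 := by
      rw [mul_pow, sq_abs]; exact hξτ
    have h := Real.sqrt_le_sqrt hsq
    rwa [Real.sqrt_sq (norm_nonneg ξ), Real.sqrt_sq (by positivity)] at h
  have hd : |d| ≤ c₁ * |τ| := by
    have h := hdτq t x τ ξ
    rw [← hddef, ← hAdef] at h
    have hsum : |τ| + ‖ξ‖ ≤ (1 + K) * |τ| := by nlinarith [abs_nonneg τ]
    have h1 : C * A * (|τ| + ‖ξ‖) ≤ C * ε * ((1 + K) * |τ|) :=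
      mul_le_mul hCA hsum (by positivity) (by positivity)
    have h2 : C * ε * ((1 + K) * |τ|) = (C * ε * (1 + K)) * |τ| := by ring
    have h3 : (C * ε * (1 + K)) * |τ| ≤ c₁ * |τ| :=
      mul_le_mul_of_nonneg_right hεc₁ (abs_nonneg τ)
    linarith
  constructor
  · rw [hderiv]
    simpa using hd
  · rw [hderiv]
    have h1 : -(|τ| * |d|) ≤ τ * d := by
      rw [← abs_mul]; exact neg_abs_le _
    have h2 : |τ| * |d| ≤ |τ| * (c₁ * |τ|) :=
      mul_le_mul_of_nonneg_left hd (abs_nonneg τ)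
    have h3 : |τ| * (c₁ * |τ|) = c₁ * τ ^ 2 := by
      rw [show |τ| * (c₁ * |τ|) = c₁ * (|τ| * |τ|) by ring, abs_mul_abs_self, sq]
    rw [h3] at h2
    have hexp : τ * (2 * τ + d) = 2 * τ ^ 2 + τ * d := by ring
    rw [hexp]
    linarith
end
end

section
/- Let δ > 0 and set α = δ/(4+δ). Let a, b, c be real numbers with |a + b − 2| ≤ δ/2, |c| ≤ α(a + b), and |b − 1| ≥ δ. Then |a − b + c| ≥ δ. -/
/-! Since `a - b + c = (a + b - 2) - 2 (b - 1) + c`, the triangle inequality gives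
`|a - b + c| ≥ 2|b - 1| - |a + b - 2| - |c| ≥ 2δ - δ/2 - |c|`. The constant `α = δ/(4+δ)` is
exactly the one for which `α (a + b) ≤ α (2 + δ/2) = δ/2`, so `|c| ≤ δ/2` and the bound is `δ`. -/

lemma two_mul_abs_sub_one_le (a b c : ℝ) :
    2 * |b - 1| ≤ |a - b + c| + |a + b - 2| + |c| :=
  calc 2 * |b - 1| = |(a + b - 2) + c - (a - b + c)| := by
        rw [show (a + b - 2) + c - (a - b + c) = 2 * (b - 1) by ring, abs_mul, abs_two]
    _ ≤ |(a + b - 2) + c| + |a - b + c| := abs_sub _ _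
    _ ≤ |a - b + c| + |a + b - 2| + |c| := by linarith [abs_add_le (a + b - 2) c]

lemma div_four_add_mul_le_half {δ s : ℝ} (hδ : 0 ≤ δ) (hs : s ≤ 2 + δ / 2) :
    δ / (4 + δ) * s ≤ δ / 2 :=
  calc δ / (4 + δ) * s ≤ δ / (4 + δ) * (2 + δ / 2) := by gcongr
    _ = δ / 2 := by field_simp; ring

theorem stmt4_general (δ a b c : ℝ)
    (h1 : |a + b - 2| ≤ δ / 2) (h2 : |c| ≤ δ / (4 + δ) * (a + b)) (h3 : δ ≤ |b - 1|) :
    δ ≤ |a - b + c| := by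
  have hδ : 0 ≤ δ := by linarith [abs_nonneg (a + b - 2)]
  have hab : a + b ≤ 2 + δ / 2 := by linarith [le_abs_self (a + b - 2)]
  have hc : |c| ≤ δ / 2 := h2.trans (div_four_add_mul_le_half hδ hab)
  linarith [two_mul_abs_sub_one_le a b c]

/-- second ellipticity estimate from the Appendix: with `α = δ/(4+δ)`, if
`|a + b − 2| ≤ δ/2`, `|c| ≤ α(a+b)` and `|b − 1| ≥ δ`, then `|a − b + c| ≥ δ`. -/
theorem stmt4 (δ a b c : ℝ) (hδ : 0 < δ)
    (h1 : |a + b - 2| ≤ δ / 2) (h2 : |c| ≤ δ / (4 + δ) * (a + b)) (h3 : δ ≤ |b - 1|) :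
    δ ≤ |a - b + c| :=
  stmt4_general δ a b c h1 h2 h3
end

section
/- For every δ > 0 there exists T₀ > 0 such that for all (t,x,τ,ξ) ∈ ℝ × ℝⁿ × ℝ × ℝⁿ satisfying |t| ≥ T₀, |τ² + q₀(x,ξ) − 2| ≤ δ/2, and either |τ² − 1| ≥ δ or |q₀(x,ξ) − 1| ≥ δ, one has |τ² − q₀(x,ξ) + q(t,x,τ,ξ)| ≥ δ. -/
/-! Off the set where both `τ²` and `q₀` are `δ`-close to `1`, the shell condition
`|τ² + q₀ − 2| ≤ δ/2` forces `|τ² − q₀| ≥ 3δ/2`. On the shell `τ² + |ξ|²` is bounded, so the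
perturbation `q = O(⟨t⟩^{−1−μ})` drops below `δ/2` once `|t|` is large, which leaves `δ`. -/

open Real

noncomputable section

lemma one_le_jap (t : ℝ) : 1 ≤ jap t := by
  rw [jap, Real.one_le_sqrt]
  linarith [sq_nonneg t]

lemma abs_le_jap (t : ℝ) : |t| ≤ jap t := by
  rw [jap, ← Real.sqrt_sq_eq_abs]
  exact Real.sqrt_le_sqrt (by linarith)

lemma jap_rpow_le_inv {μ : ℝ} (hμ : 0 ≤ μ) (t : ℝ) : jap t ^ (-1 - μ) ≤ (jap t)⁻¹ := by
  rw [← Real.rpow_neg_one]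
  exact Real.rpow_le_rpow_of_exponent_le (one_le_jap t) (by linarith)

lemma exists_forall_le_abs_jap_rpow_le {μ ε : ℝ} (hμ : 0 ≤ μ) (hε : 0 < ε) :
    ∃ T > (0 : ℝ), ∀ t, T ≤ |t| → jap t ^ (-1 - μ) ≤ ε := by
  refine ⟨ε⁻¹, inv_pos.mpr hε, fun t ht => ?_⟩
  calc jap t ^ (-1 - μ) ≤ (jap t)⁻¹ := jap_rpow_le_inv hμ t
    _ ≤ ε := inv_le_of_inv_le₀ hε (ht.trans (abs_le_jap t))

lemma exists_forall_abs_symbol_le {X E : Type*} [Norm E] {μ C : ℝ} (hμ : 0 ≤ μ) (hC : 0 < C)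
    {q : ℝ → X → ℝ → E → ℝ}
    (hq : ∀ t x τ ξ, |q t x τ ξ| ≤ C * jap t ^ (-1 - μ) * (τ ^ 2 + ‖ξ‖ ^ 2))
    {M ε : ℝ} (hM : 0 < M) (hε : 0 < ε) :
    ∃ T > (0 : ℝ), ∀ t x τ ξ, T ≤ |t| → τ ^ 2 + ‖ξ‖ ^ 2 ≤ M → |q t x τ ξ| ≤ ε := by
  obtain ⟨T, hT, hdecay⟩ :=
    exists_forall_le_abs_jap_rpow_le hμ (show 0 < ε / (C * M) by positivity)
  refine ⟨T, hT, fun t x τ ξ ht hS => ?_⟩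
  calc |q t x τ ξ| ≤ C * jap t ^ (-1 - μ) * (τ ^ 2 + ‖ξ‖ ^ 2) := hq t x τ ξ
    _ ≤ C * (ε / (C * M)) * M := by gcongr; exact hdecay t ht
    _ = ε := by field_simp

lemma add_le_mul_one_add_inv_of_add_le {a b Q R c₀ : ℝ} (hc₀ : 0 < c₀) (ha : 0 ≤ a) (hb : 0 ≤ b)
    (hbQ : c₀ * b ≤ Q) (h : a + Q ≤ R) : a + b ≤ R * (1 + c₀⁻¹) := by
  have hbR : b ≤ R * c₀⁻¹ := by
    rw [← div_eq_mul_inv, le_div_iff₀ hc₀]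
    nlinarith
  nlinarith [mul_nonneg hc₀.le hb]

lemma le_abs_sub_of_abs_add_sub_two_le {a b δ : ℝ} (hshell : |a + b - 2| ≤ δ / 2)
    (hoff : δ ≤ |a - 1| ∨ δ ≤ |b - 1|) : 3 * δ / 2 ≤ |a - b| := by
  rw [abs_le] at hshell
  rw [le_abs]
  rcases hoff with h | h <;> rcases le_abs.mp h with h' | h'
  · left; linarith
  · right; linarith
  · right; linarith
  · left; linarith

theorem stmt5_general (n : ℕ) (μ C c₀ : ℝ) (hμ : 0 < μ) (hC : 0 < C) (hc₀ : 0 < c₀)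
    (q₀ : En n → En n → ℝ) (q : ℝ → En n → ℝ → En n → ℝ)
    (hq₀ell : ∀ x ξ, c₀ * ‖ξ‖ ^ 2 ≤ q₀ x ξ)
    (hq : ∀ t x τ ξ, |q t x τ ξ| ≤ C * jap t ^ (-1 - μ) * (τ ^ 2 + ‖ξ‖ ^ 2)) :
    ∀ δ > (0 : ℝ), ∃ T₀ > (0 : ℝ), ∀ (t : ℝ) (x : En n) (τ : ℝ) (ξ : En n),
      T₀ ≤ |t| → |τ ^ 2 + q₀ x ξ - 2| ≤ δ / 2 →
      (δ ≤ |τ ^ 2 - 1| ∨ δ ≤ |q₀ x ξ - 1|) →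
      δ ≤ |τ ^ 2 - q₀ x ξ + q t x τ ξ| := by
  intro δ hδ
  obtain ⟨T₀, hT₀, hsmall⟩ := exists_forall_abs_symbol_le hμ.le hC hq
    (show 0 < (2 + δ / 2) * (1 + c₀⁻¹) by positivity) (half_pos hδ)
  refine ⟨T₀, hT₀, fun t x τ ξ ht hshell hoff => ?_⟩
  have hbounded : τ ^ 2 + ‖ξ‖ ^ 2 ≤ (2 + δ / 2) * (1 + c₀⁻¹) :=
    add_le_mul_one_add_inv_of_add_le hc₀ (sq_nonneg τ) (sq_nonneg ‖ξ‖) (hq₀ell x ξ)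
      (by linarith [(abs_le.mp hshell).2])
  have hsplit := le_abs_sub_of_abs_add_sub_two_le hshell hoff
  have hq_small := hsmall t x τ ξ ht hbounded
  calc δ = 3 * δ / 2 - δ / 2 := by ring
    _ ≤ |τ ^ 2 - q₀ x ξ| - |q t x τ ξ| := by gcongr
    _ ≤ |τ ^ 2 - q₀ x ξ + q t x τ ξ| := abs_sub_abs_le_abs_add _ _

/-- uniform ellipticity of the Klein–Gordon symbol in the Appendix: for every
`δ > 0` there is `T₀ > 0` such that if `|t| ≥ T₀`, `|τ² + q₀ − 2| ≤ δ/2`, and `|τ² − 1| ≥ δ` or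
`|q₀ − 1| ≥ δ`, then `|τ² − q₀ + q| ≥ δ`. -/
theorem stmt5 (n : ℕ) (hn : 1 ≤ n) (μ C c₀ : ℝ) (hμ : 0 < μ) (hC : 0 < C) (hc₀ : 0 < c₀)
    (q₀ : En n → En n → ℝ) (q : ℝ → En n → ℝ → En n → ℝ)
    (hq₀ell : ∀ x ξ, c₀ * ‖ξ‖ ^ 2 ≤ q₀ x ξ)
    (hq : ∀ t x τ ξ, |q t x τ ξ| ≤ C * jap t ^ (-1 - μ) * (τ ^ 2 + ‖ξ‖ ^ 2)) :
    ∀ δ > (0 : ℝ), ∃ T₀ > (0 : ℝ), ∀ (t : ℝ) (x : En n) (τ : ℝ) (ξ : En n),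
      T₀ ≤ |t| → |τ ^ 2 + q₀ x ξ - 2| ≤ δ / 2 →
      (δ ≤ |τ ^ 2 - 1| ∨ δ ≤ |q₀ x ξ - 1|) →
      δ ≤ |τ ^ 2 - q₀ x ξ + q t x τ ξ| :=
  stmt5_general n μ C c₀ hμ hC hc₀ q₀ q hq₀ell hq
end
end

section
/- Let 0 < ν < μ and 0 < δ ≤ 1/16, and set λ(t) = 2δ − δ|t|^{−ν} for |t| ≥ 1 and ζ₂⁺(t,τ) = χ₂((τ − 1)/λ(t)). For every R > 0 there exists T₀ ≥ 1 such that for all (t,x,τ,ξ) with t ≤ −T₀ and |ξ| ≤ R one has −{τ² + q, ζ₂⁺}(t,x,τ,ξ) ≥ 0. -/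
open Real
open scoped RealInnerProductSpace

noncomputable section

/-- The Poisson bracket
`{a,b} = (∂_τ a)(∂_t b) + ∂_ξ a · ∂_x b − (∂_t a)(∂_τ b) − ∂_x a · ∂_ξ b`
of two functions of `(t,x,τ,ξ) ∈ ℝ × ℝⁿ × ℝ × ℝⁿ`. -/
def pb (n : ℕ) (a b : ℝ → En n → ℝ → En n → ℝ)
    (t : ℝ) (x : En n) (τ : ℝ) (ξ : En n) : ℝ :=
  deriv (fun σ => a t x σ ξ) τ * deriv (fun s => b s x τ ξ) t
    + ⟪gradient (fun η => a t x τ η) ξ, gradient (fun y => b t y τ ξ) x⟫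
    - deriv (fun s => a s x τ ξ) t * deriv (fun σ => b t x σ ξ) τ
    - ⟪gradient (fun y => a t y τ ξ) x, gradient (fun η => b t x τ η) ξ⟫

/-- The incoming width function `λ(t) = 2δ − δ|t|^{−ν}`. -/
def lamIn (δ ν t : ℝ) : ℝ := 2 * δ - δ * |t| ^ (-ν)

lemma lamIn_hasDerivAt (δ ν t : ℝ) (ht : t < 0) :
    HasDerivAt (lamIn δ ν) (-(δ * ν * (-t) ^ (-ν - 1))) t := by
  have hneg : HasDerivAt (fun s : ℝ => -s) (-1) t := (hasDerivAt_id t).neg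
  have h2 : HasDerivAt (fun y : ℝ => y ^ (-ν)) ((-ν) * (-t) ^ (-ν - 1)) (-t) :=
    Real.hasDerivAt_rpow_const (Or.inl (by linarith))
  have h1 : HasDerivAt (fun s : ℝ => (-s) ^ (-ν)) (ν * (-t) ^ (-ν - 1)) t := by
    have := h2.comp t hneg
    exact this.congr_deriv (by ring)
  have h3 : HasDerivAt (fun s : ℝ => 2 * δ - δ * (-s) ^ (-ν))
      (-(δ * ν * (-t) ^ (-ν - 1))) t := by
    have := (h1.const_mul δ).const_sub (2 * δ)
    exact this.congr_deriv (by ring)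
  refine h3.congr_of_eventuallyEq ?_
  filter_upwards [Iio_mem_nhds ht] with s hs
  simp only [lamIn, abs_of_neg (Set.mem_Iio.mp hs)]

lemma deriv_zero_of_lt_one (χ₂ : ℝ → ℝ) (hχ₂one : ∀ s : ℝ, |s| ≤ 1 → χ₂ s = 1)
    (s : ℝ) (hs : |s| < 1) : deriv χ₂ s = 0 := by
  have h : χ₂ =ᶠ[nhds s] fun _ => (1:ℝ) := by
    have : ∀ᶠ u in nhds s, |u| < 1 :=
      continuous_abs.continuousAt.eventually_lt continuousAt_const hs
    filter_upwards [this] with u hu using hχ₂one u hu.le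
  rw [h.deriv_eq, deriv_const]

lemma deriv_zero_of_gt_two (χ₂ : ℝ → ℝ) (hχ₂zero : ∀ s : ℝ, 2 ≤ |s| → χ₂ s = 0)
    (s : ℝ) (hs : 2 < |s|) : deriv χ₂ s = 0 := by
  have h : χ₂ =ᶠ[nhds s] fun _ => (0:ℝ) := by
    have : ∀ᶠ u in nhds s, 2 < |u| :=
      continuousAt_const.eventually_lt continuous_abs.continuousAt hs
    filter_upwards [this] with u hu using hχ₂zero u hu.le
  rw [h.deriv_eq, deriv_const]

set_option maxHeartbeats 1000000 in
/-- sign computation for the energy cutoff `ζ₂⁺` with slowly varying width,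
from the proof of Lemma 2.3, incoming region `t < 0`, `τ` near `+1`: with
`λ(t) = 2δ − δ|t|^{−ν}` and `ζ₂⁺(t,τ) = χ₂((τ−1)/λ(t))`, for every `R > 0` there is `T₀ ≥ 1`
such that `−{τ² + q, ζ₂⁺} ≥ 0` whenever `t ≤ −T₀` and `|ξ| ≤ R`. -/
theorem stmt9 (n : ℕ) (hn : 1 ≤ n) (μ C ν δ : ℝ) (hμ : 0 < μ) (hC : 0 < C)
    (hν : 0 < ν) (hνμ : ν < μ) (hδ : 0 < δ) (hδ' : δ ≤ 1 / 16)
    (q : ℝ → En n → ℝ → En n → ℝ)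
    (hqsmooth : ContDiff ℝ (⊤ : ℕ∞) (fun v : ℝ × En n × ℝ × En n => q v.1 v.2.1 v.2.2.1 v.2.2.2))
    (hdtq : ∀ t x τ ξ, |deriv (fun s => q s x τ ξ) t| ≤ C * jap t ^ (-1 - μ) * (τ ^ 2 + ‖ξ‖ ^ 2))
    (hdτq : ∀ t x τ ξ, |deriv (fun σ => q t x σ ξ) τ| ≤ C * jap t ^ (-1 - μ) * (|τ| + ‖ξ‖))
    (χ₂ : ℝ → ℝ) (hχ₂smooth : ContDiff ℝ (⊤ : ℕ∞) χ₂)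
    (hχ₂one : ∀ s : ℝ, |s| ≤ 1 → χ₂ s = 1) (hχ₂zero : ∀ s : ℝ, 2 ≤ |s| → χ₂ s = 0)
    (hχ₂mono : ∀ s, s * deriv χ₂ s ≤ 0) :
    ∀ R > (0 : ℝ), ∃ T₀ ≥ (1 : ℝ), ∀ (t : ℝ) (x : En n) (τ : ℝ) (ξ : En n),
      t ≤ -T₀ → ‖ξ‖ ≤ R →
      0 ≤ -pb n (fun t _x σ ξ' => σ ^ 2 + q t _x σ ξ')
            (fun s _ σ _ => χ₂ ((σ - 1) / lamIn δ ν s)) t x τ ξ := by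
  intro R hR
  set K := C * (2 + R ^ 2) / (δ * ν) with hKdef
  have hKpos : 0 < K := by positivity
  refine ⟨max (max 1 (2 * C * (2 + R))) (K ^ (1 / (μ - ν))),
    le_max_of_le_left (le_max_left _ _), ?_⟩
  intro t x τ ξ ht hξR
  have hξ0 : 0 ≤ ‖ξ‖ := norm_nonneg ξ
  have hT1 : 1 ≤ -t := by
    have := (le_max_left 1 (2 * C * (2 + R))).trans
      (le_max_left (max 1 (2 * C * (2 + R))) (K ^ (1 / (μ - ν)))); linarith
  have ht2 : 2 * C * (2 + R) ≤ -t := by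
    have := (le_max_right 1 (2 * C * (2 + R))).trans
      (le_max_left (max 1 (2 * C * (2 + R))) (K ^ (1 / (μ - ν)))); linarith
  have htK : K ^ (1 / (μ - ν)) ≤ -t := by
    have := le_max_right (max 1 (2 * C * (2 + R))) (K ^ (1 / (μ - ν))); linarith
  have htneg : t < 0 := by linarith
  have hm0 : (0:ℝ) < -t := by linarith
  set L := lamIn δ ν t with hLdef
  -- bounds on L
  have habs : |t| = -t := abs_of_neg htneg
  have hrle1 : |t| ^ (-ν) ≤ 1 := by
    rw [habs]
    exact Real.rpow_le_one_of_one_le_of_nonpos hT1 (by linarith)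
  have hrpos : 0 < |t| ^ (-ν) := Real.rpow_pos_of_pos (by rw [habs]; linarith) _
  have hmul1 : δ * (|t| ^ (-ν)) ≤ δ * 1 := mul_le_mul_of_nonneg_left hrle1 hδ.le
  have hmul2 : 0 < δ * (|t| ^ (-ν)) := mul_pos hδ hrpos
  have hLpos : 0 < L := by
    rw [hLdef, lamIn]; linarith
  have hLle : L ≤ 2 * δ := by
    rw [hLdef, lamIn]; linarith
  have hLne : L ≠ 0 := ne_of_gt hLpos
  set s₀ := (τ - 1) / L with hs₀def
  set c := deriv χ₂ s₀ with hcdef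
  set Qτ := deriv (fun σ => q t x σ ξ) τ with hQτdef
  set Qt := deriv (fun s => q s x τ ξ) t with hQtdef
  set E := δ * ν * (-t) ^ (-ν - 1) with hEdef
  have hEpos : 0 < E := by
    rw [hEdef]; positivity
  -- derivative computations
  have hqdiff : Differentiable ℝ (fun σ : ℝ => q t x σ ξ) := by
    have hm : ContDiff ℝ (⊤ : ℕ∞) (fun σ : ℝ => ((t, x, σ, ξ) : ℝ × En n × ℝ × En n)) :=
      contDiff_const.prodMk (contDiff_const.prodMk (contDiff_id.prodMk contDiff_const))
    exact (hqsmooth.comp hm).differentiable (by simp)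
  have hd1 : deriv (fun σ : ℝ => σ ^ 2 + q t x σ ξ) τ = 2 * τ + Qτ := by
    rw [deriv_fun_add ((differentiable_pow 2) τ) (hqdiff τ), deriv_pow_field]
    norm_num
    exact hQτdef.symm
  have hd1' : deriv (fun s : ℝ => τ ^ 2 + q s x τ ξ) t = Qt := deriv_const_add _
  have hχder : HasDerivAt χ₂ c s₀ :=
    ((hχ₂smooth.differentiable (by simp)) s₀).hasDerivAt
  have hg : HasDerivAt (fun s : ℝ => (τ - 1) / lamIn δ ν s) ((τ - 1) * (E / L ^ 2)) t := by
    have hinv : HasDerivAt (fun s : ℝ => (lamIn δ ν s)⁻¹) (-(-E) / L ^ 2) t :=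
      (lamIn_hasDerivAt δ ν t htneg).inv hLne
    have h := hinv.const_mul (τ - 1)
    simp only [div_eq_mul_inv]
    exact h.congr_deriv (by ring)
  have hd2 : deriv (fun s : ℝ => χ₂ ((τ - 1) / lamIn δ ν s)) t
      = c * ((τ - 1) * (E / L ^ 2)) := by
    have : HasDerivAt (fun s : ℝ => χ₂ ((τ - 1) / lamIn δ ν s))
        (c * ((τ - 1) * (E / L ^ 2))) t := hχder.comp t hg
    exact this.deriv
  have hd3 : deriv (fun σ : ℝ => χ₂ ((σ - 1) / L)) τ = c * (1 / L) := by
    have hg2 : HasDerivAt (fun σ : ℝ => (σ - 1) / L) (1 / L) τ := by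
      simpa using ((hasDerivAt_id τ).sub_const 1).div_const L
    exact (hχder.comp τ hg2).deriv
  have hpb : pb n (fun t _x σ ξ' => σ ^ 2 + q t _x σ ξ')
      (fun s _ σ _ => χ₂ ((σ - 1) / lamIn δ ν s)) t x τ ξ
      = (2 * τ + Qτ) * (c * ((τ - 1) * (E / L ^ 2))) - Qt * (c * (1 / L)) := by
    simp only [pb]
    rw [hd1, hd1', hd2, hd3, gradient_fun_const, gradient_fun_const,
      inner_zero_right, inner_zero_right]
    ring
  -- main case split
  rcases eq_or_ne c 0 with hc0 | hc0
  · rw [hpb, hc0]; norm_num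
  -- now c ≠ 0
  have hs1 : 1 ≤ |s₀| := by
    by_contra h
    exact hc0 (deriv_zero_of_lt_one χ₂ hχ₂one s₀ (by linarith [abs_nonneg s₀]))
  have hs2 : |s₀| ≤ 2 := by
    by_contra h
    exact hc0 (deriv_zero_of_gt_two χ₂ hχ₂zero s₀ (by linarith))
  have hsc : s₀ * c ≤ 0 := hχ₂mono s₀
  have hτ1 : τ - 1 = s₀ * L := by
    rw [hs₀def]; field_simp
  have hτub : |τ - 1| ≤ 1 / 4 := by
    rw [hτ1, abs_mul, abs_of_pos hLpos]
    calc |s₀| * L ≤ 2 * (2 * δ) := by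
          apply mul_le_mul hs2 hLle hLpos.le (by norm_num)
      _ ≤ 1 / 4 := by linarith
  have hτlb : 3 / 4 ≤ τ := by
    have := abs_le.mp hτub; linarith
  have hτub' : τ ≤ 5 / 4 := by
    have := abs_le.mp hτub; linarith
  -- jap bound
  have hjap : -t ≤ jap t := by
    rw [jap]
    have h1 : Real.sqrt (t ^ 2) ≤ Real.sqrt (1 + t ^ 2) :=
      Real.sqrt_le_sqrt (by linarith [sq_nonneg t])
    rw [Real.sqrt_sq_eq_abs, habs] at h1
    exact h1
  have hjappow : jap t ^ (-1 - μ) ≤ (-t) ^ (-1 - μ) :=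
    Real.rpow_le_rpow_of_nonpos hm0 hjap (by linarith)
  have hjapnn : 0 ≤ jap t ^ (-1 - μ) :=
    Real.rpow_nonneg (Real.sqrt_nonneg _) _
  -- bound on Qτ
  have hmpow1 : (-t) ^ (-1 - μ) ≤ (-t)⁻¹ := by
    have := Real.rpow_le_rpow_of_exponent_le hT1 (show -1 - μ ≤ -1 by linarith)
    rwa [Real.rpow_neg_one] at this
  have hQτbd : |Qτ| ≤ 1 / 2 := by
    have h1 := hdτq t x τ ξ
    have h2 : C * jap t ^ (-1 - μ) * (|τ| + ‖ξ‖) ≤ C * (-t)⁻¹ * (2 + R) := by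
      have habsτ : |τ| ≤ 2 := by rw [abs_of_pos (by linarith : (0:ℝ) < τ)]; linarith
      have hle : (-t) ^ (-1 - μ) ≤ (-t)⁻¹ := hmpow1
      have : jap t ^ (-1 - μ) ≤ (-t)⁻¹ := le_trans hjappow hle
      have hnn : (0:ℝ) ≤ (-t)⁻¹ := by positivity
      calc C * jap t ^ (-1 - μ) * (|τ| + ‖ξ‖)
          ≤ C * (-t)⁻¹ * (|τ| + ‖ξ‖) := by
            apply mul_le_mul_of_nonneg_right _ (by positivity)
            exact mul_le_mul_of_nonneg_left this hC.le
        _ ≤ C * (-t)⁻¹ * (2 + R) := by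
            apply mul_le_mul_of_nonneg_left (by linarith) (by positivity)
    have h3 : C * (-t)⁻¹ * (2 + R) ≤ 1 / 2 := by
      rw [mul_comm C _, mul_assoc]
      rw [inv_mul_le_iff₀ hm0]
      linarith
    linarith [le_trans h1 (le_trans h2 h3)]
  have h2τQτ : 1 ≤ 2 * τ + Qτ := by
    have := abs_le.mp hQτbd; linarith
  -- bound on Qt and E
  have hQtbd : |Qt| ≤ C * (2 + R ^ 2) * (-t) ^ (-1 - μ) := by
    have h1 := hdtq t x τ ξ
    have h2 : C * jap t ^ (-1 - μ) * (τ ^ 2 + ‖ξ‖ ^ 2)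
        ≤ C * (-t) ^ (-1 - μ) * (2 + R ^ 2) := by
      have hτ2 : τ ^ 2 ≤ 2 := by
        calc τ ^ 2 ≤ (5/4 : ℝ) ^ 2 := pow_le_pow_left₀ (by linarith) hτub' 2
          _ ≤ 2 := by norm_num
      have hξ2 : ‖ξ‖ ^ 2 ≤ R ^ 2 := pow_le_pow_left₀ hξ0 hξR 2
      have hnn : (0:ℝ) ≤ (-t) ^ (-1 - μ) := by positivity
      calc C * jap t ^ (-1 - μ) * (τ ^ 2 + ‖ξ‖ ^ 2)
          ≤ C * (-t) ^ (-1 - μ) * (τ ^ 2 + ‖ξ‖ ^ 2) := by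
            apply mul_le_mul_of_nonneg_right _ (by positivity)
            exact mul_le_mul_of_nonneg_left hjappow hC.le
        _ ≤ C * (-t) ^ (-1 - μ) * (2 + R ^ 2) := by
            apply mul_le_mul_of_nonneg_left (by linarith) (by positivity)
    calc |Qt| ≤ C * jap t ^ (-1 - μ) * (τ ^ 2 + ‖ξ‖ ^ 2) := h1
      _ ≤ C * (-t) ^ (-1 - μ) * (2 + R ^ 2) := h2
      _ = C * (2 + R ^ 2) * (-t) ^ (-1 - μ) := by ring
  have hKE : C * (2 + R ^ 2) * (-t) ^ (-1 - μ) ≤ E := by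
    have hμν : (0:ℝ) < μ - ν := by linarith
    have hKm : K ≤ (-t) ^ (μ - ν) := by
      have h0 : (K ^ (1 / (μ - ν))) ^ (μ - ν) = K := by
        rw [← Real.rpow_mul hKpos.le, one_div_mul_cancel (ne_of_gt hμν), Real.rpow_one]
      have h1 : (K ^ (1 / (μ - ν))) ^ (μ - ν) ≤ (-t) ^ (μ - ν) :=
        Real.rpow_le_rpow (Real.rpow_nonneg hKpos.le _) htK hμν.le
      rw [h0] at h1; exact h1
    have hsplit : (-t) ^ (-ν - 1) = (-t) ^ (μ - ν) * (-t) ^ (-1 - μ) := by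
      rw [← Real.rpow_add hm0]; ring_nf
    have hpw : (0:ℝ) < (-t) ^ (-1 - μ) := Real.rpow_pos_of_pos hm0 _
    have hCK : C * (2 + R ^ 2) = δ * ν * K := by
      rw [hKdef]; field_simp
    rw [hEdef, hsplit, hCK]
    calc δ * ν * K * (-t) ^ (-1 - μ)
        ≤ δ * ν * (-t) ^ (μ - ν) * (-t) ^ (-1 - μ) := by
          apply mul_le_mul_of_nonneg_right _ hpw.le
          exact mul_le_mul_of_nonneg_left hKm (by positivity)
      _ = δ * ν * ((-t) ^ (μ - ν) * (-t) ^ (-1 - μ)) := by ring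
  have hQtE : |Qt| ≤ E := le_trans hQtbd hKE
  -- final combination
  have hAc : |c| ≤ -(s₀ * c) := by
    have h1 : -(s₀ * c) = |s₀ * c| := (abs_of_nonpos hsc).symm
    rw [h1, abs_mul]
    calc |c| = 1 * |c| := (one_mul _).symm
      _ ≤ |s₀| * |c| := mul_le_mul_of_nonneg_right hs1 (abs_nonneg c)
  have hkey : 0 ≤ (-(s₀ * c)) * ((2 * τ + Qτ) * E) + Qt * c := by
    have h5 : |c| * E ≤ (-(s₀ * c)) * ((2 * τ + Qτ) * E) := by
      have hcE : 0 ≤ |c| := abs_nonneg c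
      calc |c| * E = |c| * (1 * E) := by ring
        _ ≤ (-(s₀ * c)) * ((2 * τ + Qτ) * E) := by
          apply mul_le_mul hAc _ (by positivity) (le_trans hcE hAc)
          rw [one_mul]
          exact le_mul_of_one_le_left hEpos.le h2τQτ
    have h6 : -(Qt * c) ≤ |Qt| * |c| := by
      rw [← abs_mul]; exact neg_le_abs _
    have h7 : |Qt| * |c| ≤ |c| * E := by
      rw [mul_comm]; exact mul_le_mul_of_nonneg_left hQtE (abs_nonneg c)
    have h8 : -(Qt * c) ≤ (-(s₀ * c)) * ((2 * τ + Qτ) * E) := (h6.trans h7).trans h5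
    exact neg_le_iff_add_nonneg.mp h8
  have hfin : -pb n (fun t _x σ ξ' => σ ^ 2 + q t _x σ ξ')
      (fun s _ σ _ => χ₂ ((σ - 1) / lamIn δ ν s)) t x τ ξ
      = L⁻¹ * ((-(s₀ * c)) * ((2 * τ + Qτ) * E) + Qt * c) := by
    rw [hpb, hτ1]
    field_simp
    ring
  rw [hfin]
  exact mul_nonneg (inv_nonneg.mpr hLpos.le) hkey
end
end

section
/- Let γ > 0, 0 < ν < μ, 0 < δ ≤ 1/16, and set λ(t) = 2δ − δ|t|^{−ν} for |t| ≥ 1. For T ≥ 1 set ζ₁⁻(t) = χ₁((t/T) + 1) and ζ₂⁺(t,τ) = χ₂((τ − 1)/λ(t)). Then there exists T₀ ≥ 1 such that for every T ≥ T₀ and all (t,x,τ,ξ) with |t| ≥ 1 and q₀(x,ξ) ≤ 1 + 4δ one has −{τ² + q, |t|^γ ζ₁⁻ ζ₂⁺}(t,x,τ,ξ) ≥ γ |t|^{γ−1} ζ₁⁻(t) ζ₂⁺(t,τ). -/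
open Real
open scoped RealInnerProductSpace

noncomputable section

set_option maxHeartbeats 1000000

private lemma chi_deriv_zero_of_abs_lt_one (χ₂ : ℝ → ℝ)
    (hone : ∀ s : ℝ, |s| ≤ 1 → χ₂ s = 1) {w : ℝ} (hw : |w| < 1) : deriv χ₂ w = 0 := by
  have hev : χ₂ =ᶠ[nhds w] fun _ => (1 : ℝ) := by
    have hop : IsOpen {u : ℝ | |u| < 1} := isOpen_lt continuous_abs continuous_const
    filter_upwards [hop.eventually_mem hw] with u hu
    exact hone u (le_of_lt hu)
  rw [hev.deriv_eq]; exact deriv_const _ _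

private lemma chi_deriv_zero_of_two_lt_abs (χ₂ : ℝ → ℝ)
    (hzero : ∀ s : ℝ, 2 ≤ |s| → χ₂ s = 0) {w : ℝ} (hw : 2 < |w|) : deriv χ₂ w = 0 := by
  have hev : χ₂ =ᶠ[nhds w] fun _ => (0 : ℝ) := by
    have hop : IsOpen {u : ℝ | 2 < |u|} := isOpen_lt continuous_const continuous_abs
    filter_upwards [hop.eventually_mem hw] with u hu
    exact hzero u (le_of_lt hu)
  rw [hev.deriv_eq]; exact deriv_const _ _

private lemma chi2_nonneg (χ₂ : ℝ → ℝ) (hsm : ContDiff ℝ (⊤ : ℕ∞) χ₂)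
    (hone : ∀ s : ℝ, |s| ≤ 1 → χ₂ s = 1) (hzero : ∀ s : ℝ, 2 ≤ |s| → χ₂ s = 0)
    (hm : ∀ s, s * deriv χ₂ s ≤ 0) : ∀ s, 0 ≤ χ₂ s := by
  have hdiff : Differentiable ℝ χ₂ := hsm.differentiable (by simp)
  intro s
  rcases le_total s 0 with hs | hs
  · rcases le_total s (-2) with h2 | h2
    · rw [hzero s (by rw [abs_of_nonpos hs]; linarith)]
    · have hmono : MonotoneOn χ₂ (Set.Iic (0 : ℝ)) := by
        apply monotoneOn_of_deriv_nonneg (convex_Iic 0) hdiff.continuous.continuousOn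
          hdiff.differentiableOn
        intro u hu
        rw [interior_Iic] at hu
        have hu' : u < 0 := hu
        by_contra hcon
        push_neg at hcon
        nlinarith [hm u, mul_pos_of_neg_of_neg hu' hcon]
      have h0 : χ₂ (-2) ≤ χ₂ s := hmono (by norm_num) (Set.mem_Iic.mpr hs) h2
      rw [hzero (-2) (by norm_num)] at h0; exact h0
  · rcases le_total 2 s with h2 | h2
    · rw [hzero s (by rw [abs_of_nonneg hs]; linarith)]
    · have hmono : AntitoneOn χ₂ (Set.Ici (0 : ℝ)) := by
        apply antitoneOn_of_deriv_nonpos (convex_Ici 0) hdiff.continuous.continuousOn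
          hdiff.differentiableOn
        intro u hu
        rw [interior_Ici] at hu
        have hu' : (0 : ℝ) < u := hu
        by_contra hcon
        push_neg at hcon
        nlinarith [hm u, mul_pos hu' hcon]
      have h0 : χ₂ 2 ≤ χ₂ s := hmono (Set.mem_Ici.mpr hs) (by norm_num) h2
      rw [hzero 2 (by norm_num)] at h0; exact h0

/-- positivity estimate (2.1) in the proof of Lemma 2.3, on the region
`q₀(x,ξ) ≤ 1 + 4δ`: with `ζ₁⁻(t) = χ₁((t/T)+1)` and `ζ₂⁺(t,τ) = χ₂((τ−1)/λ(t))`, there is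
`T₀ ≥ 1` such that for every `T ≥ T₀`, whenever `|t| ≥ 1` and `q₀(x,ξ) ≤ 1 + 4δ`,
`−{τ² + q, |t|^γ ζ₁⁻ ζ₂⁺} ≥ γ|t|^{γ−1} ζ₁⁻(t) ζ₂⁺(t,τ)`. -/
theorem stmt10 (n : ℕ) (hn : 1 ≤ n) (μ C c₀ γ ν δ : ℝ) (hμ : 0 < μ) (hC : 0 < C) (hc₀ : 0 < c₀)
    (hγ : 0 < γ) (hν : 0 < ν) (hνμ : ν < μ) (hδ : 0 < δ) (hδ' : δ ≤ 1 / 16)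
    (q₀ : En n → En n → ℝ)
    (hq₀smooth : ContDiff ℝ (⊤ : ℕ∞) (fun v : En n × En n => q₀ v.1 v.2))
    (hq₀ell : ∀ x ξ, c₀ * ‖ξ‖ ^ 2 ≤ q₀ x ξ)
    (q : ℝ → En n → ℝ → En n → ℝ)
    (hqsmooth : ContDiff ℝ (⊤ : ℕ∞) (fun v : ℝ × En n × ℝ × En n => q v.1 v.2.1 v.2.2.1 v.2.2.2))
    (hdtq : ∀ t x τ ξ, |deriv (fun s => q s x τ ξ) t| ≤ C * jap t ^ (-1 - μ) * (τ ^ 2 + ‖ξ‖ ^ 2))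
    (hdτq : ∀ t x τ ξ, |deriv (fun σ => q t x σ ξ) τ| ≤ C * jap t ^ (-1 - μ) * (|τ| + ‖ξ‖))
    (χ₁ : ℝ → ℝ) (hχ₁smooth : ContDiff ℝ (⊤ : ℕ∞) χ₁)
    (hχ₁one : ∀ s ≤ (-1 : ℝ), χ₁ s = 1) (hχ₁zero : ∀ s ≥ (0 : ℝ), χ₁ s = 0)
    (hχ₁mono : ∀ s, deriv χ₁ s ≤ 0)
    (χ₂ : ℝ → ℝ) (hχ₂smooth : ContDiff ℝ (⊤ : ℕ∞) χ₂)
    (hχ₂one : ∀ s : ℝ, |s| ≤ 1 → χ₂ s = 1) (hχ₂zero : ∀ s : ℝ, 2 ≤ |s| → χ₂ s = 0)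
    (hχ₂mono : ∀ s, s * deriv χ₂ s ≤ 0) :
    ∃ T₀ ≥ (1 : ℝ), ∀ T ≥ T₀, ∀ (t : ℝ) (x : En n) (τ : ℝ) (ξ : En n),
      1 ≤ |t| → q₀ x ξ ≤ 1 + 4 * δ →
      γ * |t| ^ (γ - 1) * χ₁ (t / T + 1) * χ₂ ((τ - 1) / lamIn δ ν t)
        ≤ -pb n (fun t _x σ ξ' => σ ^ 2 + q t _x σ ξ')
            (fun s _ σ _ => |s| ^ γ * χ₁ (s / T + 1) * χ₂ ((σ - 1) / lamIn δ ν s)) t x τ ξ := by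
  classical
  -- the two smallness conditions, valid for large `r`
  have l1 : Filter.Tendsto (fun r : ℝ => C * r ^ (-1 - μ) * (2 + Real.sqrt (2 / c₀)))
      Filter.atTop (nhds 0) := by
    have h0 : Filter.Tendsto (fun r : ℝ => r ^ (-(1 + μ))) Filter.atTop (nhds 0) :=
      tendsto_rpow_neg_atTop (by linarith)
    have h1 := (h0.const_mul C).mul_const (2 + Real.sqrt (2 / c₀))
    simpa [show -(1 + μ) = -1 - μ by ring] using h1
  have l2 : Filter.Tendsto (fun r : ℝ => C * (2 + 2 / c₀) * r ^ (ν - μ))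
      Filter.atTop (nhds 0) := by
    have h0 : Filter.Tendsto (fun r : ℝ => r ^ (-(μ - ν))) Filter.atTop (nhds 0) :=
      tendsto_rpow_neg_atTop (by linarith)
    have h1 := h0.const_mul (C * (2 + 2 / c₀))
    simpa [show -(μ - ν) = ν - μ by ring] using h1
  have hev : ∀ᶠ r : ℝ in Filter.atTop,
      C * r ^ (-1 - μ) * (2 + Real.sqrt (2 / c₀)) ≤ 1 / 2 ∧
      C * (2 + 2 / c₀) * r ^ (ν - μ) ≤ δ * ν := by
    filter_upwards [l1.eventually_lt_const (show (0 : ℝ) < 1 / 2 by norm_num),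
      l2.eventually_lt_const (show (0 : ℝ) < δ * ν by positivity)] with r h1 h2
    exact ⟨h1.le, h2.le⟩
  obtain ⟨T₁, hT₁⟩ := Filter.eventually_atTop.mp hev
  refine ⟨max T₁ 1, le_max_right _ _, fun T hT t x τ ξ ht hq0 => ?_⟩
  have hT1 : (1 : ℝ) ≤ T := le_trans (le_max_right T₁ 1) hT
  have hTpos : (0 : ℝ) < T := by linarith
  by_cases hcase : t ≤ -T
  case neg =>
    -- here `t > -T`, so the cut-off `χ₁` vanishes near `t`
    have hlt : (0 : ℝ) < t / T + 1 := by
      have h1 : -T < t := not_le.mp hcase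
      have h2 : (-1 : ℝ) < t / T := by
        rw [lt_div_iff₀ hTpos]; linarith
      linarith
    have hA1z : χ₁ (t / T + 1) = 0 := hχ₁zero _ (le_of_lt hlt)
    have hder_t : deriv (fun s : ℝ =>
        |s| ^ γ * χ₁ (s / T + 1) * χ₂ ((τ - 1) / lamIn δ ν s)) t = 0 := by
      have hev' : (fun s : ℝ => |s| ^ γ * χ₁ (s / T + 1) * χ₂ ((τ - 1) / lamIn δ ν s))
          =ᶠ[nhds t] fun _ => (0 : ℝ) := by
        have hc : ContinuousAt (fun s : ℝ => s / T + 1) t := by fun_prop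
        filter_upwards [hc.eventually_mem (isOpen_Ioi.mem_nhds hlt)] with s hs
        have : χ₁ (s / T + 1) = 0 := hχ₁zero _ (le_of_lt hs)
        simp [this]
      rw [hev'.deriv_eq]; exact deriv_const _ _
    simp only [pb, gradient_const, inner_zero_right, add_zero, sub_zero]
    rw [hder_t]
    simp [hA1z]
  case pos =>
    have htneg : t < 0 := by linarith
    have hrpos : (0 : ℝ) < -t := by linarith
    have hr1 : (1 : ℝ) ≤ -t := by linarith
    have habs : |t| = -t := abs_of_neg htneg
    obtain ⟨hE1, hE2⟩ := hT₁ (-t) (by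
      have : T₁ ≤ max T₁ 1 := le_max_left _ _
      linarith)
    -- bounds on ‖ξ‖
    have hξsq : ‖ξ‖ ^ 2 ≤ 2 / c₀ := by
      rw [le_div_iff₀ hc₀]
      linarith [hq₀ell x ξ]
    have hξ : ‖ξ‖ ≤ Real.sqrt (2 / c₀) := by
      have h1 := Real.sqrt_le_sqrt hξsq
      rwa [Real.sqrt_sq (norm_nonneg _)] at h1
    -- the Japanese bracket dominates |t|
    have hjap' : -t ≤ jap t := by
      calc -t = |t| := habs.symm
        _ = Real.sqrt (t ^ 2) := (Real.sqrt_sq_eq_abs t).symm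
        _ ≤ jap t := Real.sqrt_le_sqrt (by linarith [sq_nonneg t])
    have hjapbd : jap t ^ (-1 - μ) ≤ (-t) ^ (-1 - μ) :=
      Real.rpow_le_rpow_of_nonpos hrpos hjap' (by linarith)
    -- bounds on λ = lamIn δ ν t
    have hlamval : lamIn δ ν t = 2 * δ - δ * (-t) ^ (-ν) := by rw [lamIn, habs]
    have hrν1 : (-t) ^ (-ν) ≤ 1 :=
      Real.rpow_le_one_of_one_le_of_nonpos hr1 (by linarith)
    have hrν0 : 0 ≤ (-t) ^ (-ν) := Real.rpow_nonneg hrpos.le _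
    have hlamlo : δ ≤ lamIn δ ν t := by
      rw [hlamval]
      have h := mul_le_of_le_one_right hδ.le hrν1
      linarith
    have hlamhi : lamIn δ ν t ≤ 2 * δ := by
      rw [hlamval]
      have h := mul_nonneg hδ.le hrν0
      linarith
    have hlampos : 0 < lamIn δ ν t := lt_of_lt_of_le hδ hlamlo
    have hlamne : lamIn δ ν t ≠ 0 := ne_of_gt hlampos
    -- derivatives
    have hpow : HasDerivAt (fun s : ℝ => |s| ^ γ) (γ * (-t) ^ (γ - 1) * (-1)) t := by
      have h2 : HasDerivAt (fun y : ℝ => y ^ γ) (γ * (-t) ^ (γ - 1)) (-t) :=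
        Real.hasDerivAt_rpow_const (Or.inl (by linarith))
      have h3 : HasDerivAt (fun s : ℝ => (-s) ^ γ) (γ * (-t) ^ (γ - 1) * (-1)) t :=
        h2.comp t (hasDerivAt_neg t)
      exact h3.congr_of_eventuallyEq
        (by filter_upwards [Iio_mem_nhds htneg] with s hs; rw [abs_of_neg (Set.mem_Iio.mp hs)])
    have hζ1 : HasDerivAt (fun s : ℝ => χ₁ (s / T + 1)) (deriv χ₁ (t / T + 1) * (1 / T)) t := by
      have hin : HasDerivAt (fun s : ℝ => s / T + 1) (1 / T) t :=
        ((hasDerivAt_id t).div_const T).add_const 1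
      exact (((hχ₁smooth.differentiable (by simp)) (t / T + 1)).hasDerivAt).comp t hin
    have hlam : HasDerivAt (lamIn δ ν) (-(δ * ν * (-t) ^ (-1 - ν))) t := by
      have h2 : HasDerivAt (fun y : ℝ => y ^ (-ν)) (-ν * (-t) ^ (-ν - 1)) (-t) :=
        Real.hasDerivAt_rpow_const (Or.inl (by linarith))
      have h3 : HasDerivAt (fun s : ℝ => (-s) ^ (-ν)) (-ν * (-t) ^ (-ν - 1) * (-1)) t :=
        h2.comp t (hasDerivAt_neg t)
      have h4 : HasDerivAt (fun s : ℝ => 2 * δ - δ * (-s) ^ (-ν))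
          (-(δ * (-ν * (-t) ^ (-ν - 1) * (-1)))) t := (h3.const_mul δ).const_sub (2 * δ)
      have h5 : HasDerivAt (lamIn δ ν) (-(δ * (-ν * (-t) ^ (-ν - 1) * (-1)))) t := by
        apply h4.congr_of_eventuallyEq
        filter_upwards [Iio_mem_nhds htneg] with s hs
        simp [lamIn, abs_of_neg (Set.mem_Iio.mp hs)]
      have hval : -(δ * (-ν * (-t) ^ (-ν - 1) * (-1))) = -(δ * ν * (-t) ^ (-1 - ν)) := by
        rw [show (-ν - 1 : ℝ) = -1 - ν by ring]; ring
      rwa [hval] at h5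
    have hwdiv : HasDerivAt (fun s : ℝ => (τ - 1) / lamIn δ ν s)
        ((τ - 1) * (δ * ν * (-t) ^ (-1 - ν)) / lamIn δ ν t ^ 2) t := by
      have h1 := (hasDerivAt_const t (τ - 1)).div hlam hlamne
      have hval : (0 * lamIn δ ν t - (τ - 1) * -(δ * ν * (-t) ^ (-1 - ν))) / lamIn δ ν t ^ 2
          = (τ - 1) * (δ * ν * (-t) ^ (-1 - ν)) / lamIn δ ν t ^ 2 := by ring
      rwa [hval] at h1
    have hζ2 : HasDerivAt (fun s : ℝ => χ₂ ((τ - 1) / lamIn δ ν s))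
        (deriv χ₂ ((τ - 1) / lamIn δ ν t) *
          ((τ - 1) * (δ * ν * (-t) ^ (-1 - ν)) / lamIn δ ν t ^ 2)) t :=
      (((hχ₂smooth.differentiable (by simp)) ((τ - 1) / lamIn δ ν t)).hasDerivAt).comp t hwdiv
    have hBt : HasDerivAt (fun s : ℝ => |s| ^ γ * χ₁ (s / T + 1) * χ₂ ((τ - 1) / lamIn δ ν s))
        ((γ * (-t) ^ (γ - 1) * (-1) * χ₁ (t / T + 1)
            + |t| ^ γ * (deriv χ₁ (t / T + 1) * (1 / T))) * χ₂ ((τ - 1) / lamIn δ ν t)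
          + |t| ^ γ * χ₁ (t / T + 1) * (deriv χ₂ ((τ - 1) / lamIn δ ν t) *
            ((τ - 1) * (δ * ν * (-t) ^ (-1 - ν)) / lamIn δ ν t ^ 2))) t :=
      (hpow.mul hζ1).mul hζ2
    have hBtd := hBt.deriv
    rw [habs] at hBtd
    have hBτ : HasDerivAt (fun σ : ℝ => (-t) ^ γ * χ₁ (t / T + 1) * χ₂ ((σ - 1) / lamIn δ ν t))
        ((-t) ^ γ * χ₁ (t / T + 1) * (deriv χ₂ ((τ - 1) / lamIn δ ν t) * (1 / lamIn δ ν t))) τ := by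
      have hin : HasDerivAt (fun σ : ℝ => (σ - 1) / lamIn δ ν t) (1 / lamIn δ ν t) τ :=
        ((hasDerivAt_id τ).sub_const 1).div_const (lamIn δ ν t)
      exact ((((hχ₂smooth.differentiable (by simp)) ((τ - 1) / lamIn δ ν t)).hasDerivAt).comp τ hin).const_mul ((-t) ^ γ * χ₁ (t / T + 1))
    have hqτdiff : DifferentiableAt ℝ (fun σ : ℝ => q t x σ ξ) τ := by
      have h1 : DifferentiableAt ℝ (fun v : ℝ × En n × ℝ × En n => q v.1 v.2.1 v.2.2.1 v.2.2.2)
          (t, x, τ, ξ) := (hqsmooth.differentiable (by simp)) _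
      have h2 : DifferentiableAt ℝ (fun σ : ℝ => ((t, x, σ, ξ) : ℝ × En n × ℝ × En n)) τ :=
        DifferentiableAt.prodMk (differentiableAt_const _) (DifferentiableAt.prodMk (differentiableAt_const _)
          (DifferentiableAt.prodMk differentiableAt_fun_id (differentiableAt_const _)))
      exact h1.comp τ h2
    have haτ : deriv (fun σ : ℝ => σ ^ 2 + q t x σ ξ) τ
        = 2 * τ + deriv (fun σ : ℝ => q t x σ ξ) τ := by
      have h1 : HasDerivAt (fun σ : ℝ => σ ^ 2) (2 * τ) τ := by
        simpa using hasDerivAt_pow 2 τ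
      exact (h1.add hqτdiff.hasDerivAt).deriv
    -- rewrite the goal
    simp only [pb, gradient_const, gradient_fun_const, inner_zero_right, add_zero, sub_zero]
    rw [habs, haτ, hBtd, hBτ.deriv, deriv_const_add]
    set W := (τ - 1) / lamIn δ ν t with hWdef
    set Dτ := deriv (fun σ : ℝ => q t x σ ξ) τ with hDτdef
    set Dt := deriv (fun s : ℝ => q s x τ ξ) t with hDtdef
    by_cases hz : χ₂ W = 0 ∧ deriv χ₂ W = 0
    · rw [hz.1, hz.2]
      simp
    · -- on the support of χ₂ or χ₂', τ is close to 1
      have hw2 : |W| ≤ 2 := by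
        by_contra h
        push_neg at h
        exact hz ⟨hχ₂zero _ h.le, chi_deriv_zero_of_two_lt_abs χ₂ hχ₂zero h⟩
      have hτ1 : |τ - 1| ≤ 4 * δ := by
        have hτW : τ - 1 = W * lamIn δ ν t := (div_mul_cancel₀ _ hlamne).symm
        calc |τ - 1| = |W| * |lamIn δ ν t| := by rw [hτW, abs_mul]
          _ = |W| * lamIn δ ν t := by rw [abs_of_pos hlampos]
          _ ≤ 2 * (2 * δ) := by
              apply mul_le_mul hw2 hlamhi hlampos.le (by norm_num)
          _ = 4 * δ := by ring
      have hτlo : 3 / 4 ≤ τ := by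
        have := abs_le.mp hτ1; linarith
      have hτhi : τ ≤ 5 / 4 := by
        have := abs_le.mp hτ1; linarith
      have hCr : (0 : ℝ) ≤ C * (-t) ^ (-1 - μ) :=
        mul_nonneg hC.le (Real.rpow_nonneg hrpos.le _)
      -- bound on ∂_τ q
      have hQτ : |Dτ| ≤ 1 / 2 := by
        calc |Dτ| ≤ C * jap t ^ (-1 - μ) * (|τ| + ‖ξ‖) := hdτq t x τ ξ
          _ ≤ C * (-t) ^ (-1 - μ) * (2 + Real.sqrt (2 / c₀)) := by
              apply mul_le_mul (mul_le_mul_of_nonneg_left hjapbd hC.le)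
              · have : |τ| ≤ 2 := by rw [abs_of_pos (by linarith)]; linarith
                linarith
              · positivity
              · exact hCr
          _ ≤ 1 / 2 := hE1
      -- bound on ∂_t q
      have hQt : |Dt| ≤ δ * ν * (-t) ^ (-1 - ν) := by
        calc |Dt| ≤ C * jap t ^ (-1 - μ) * (τ ^ 2 + ‖ξ‖ ^ 2) := hdtq t x τ ξ
          _ ≤ C * (-t) ^ (-1 - μ) * (2 + 2 / c₀) := by
              apply mul_le_mul (mul_le_mul_of_nonneg_left hjapbd hC.le)
              · have hτ0 : (0:ℝ) ≤ τ := by linarith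
                have h := mul_self_le_mul_self hτ0 hτhi
                have hτsq : τ ^ 2 ≤ 2 := by rw [pow_two]; linarith
                linarith [hξsq]
              · positivity
              · exact hCr
          _ = C * (2 + 2 / c₀) * (-t) ^ (ν - μ) * (-t) ^ (-1 - ν) := by
              rw [show C * (2 + 2 / c₀) * (-t) ^ (ν - μ) * (-t) ^ (-1 - ν)
                    = C * (2 + 2 / c₀) * ((-t) ^ (ν - μ) * (-t) ^ (-1 - ν)) from by ring,
                ← Real.rpow_add hrpos, show ν - μ + (-1 - ν) = -1 - μ by ring]
              ring
          _ ≤ δ * ν * (-t) ^ (-1 - ν) :=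
              mul_le_mul_of_nonneg_right hE2 (Real.rpow_nonneg hrpos.le _)
      have h2τ : 1 ≤ 2 * τ + Dτ := by
        have := abs_le.mp hQτ; linarith
      -- nonnegativity facts
      have hA1n : 0 ≤ χ₁ (t / T + 1) := by
        have hanti : Antitone χ₁ :=
          antitone_of_deriv_nonpos (hχ₁smooth.differentiable (by simp)) hχ₁mono
        have hle : t / T + 1 ≤ 0 := by
          have : t / T ≤ -1 := by rw [div_le_iff₀ hTpos]; linarith
          linarith
        have := hanti hle
        rwa [hχ₁zero 0 le_rfl] at this
      have hA2n : 0 ≤ χ₂ W := chi2_nonneg χ₂ hχ₂smooth hχ₂one hχ₂zero hχ₂mono W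
      have hpg1 : 0 ≤ (-t) ^ (γ - 1) := Real.rpow_nonneg hrpos.le _
      have hpg : 0 ≤ (-t) ^ γ := Real.rpow_nonneg hrpos.le _
      have hpν : 0 ≤ (-t) ^ (-1 - ν) := Real.rpow_nonneg hrpos.le _
      have hP1 : 0 ≤ (2 * τ + Dτ - 1) * (γ * (-t) ^ (γ - 1) * χ₁ (t / T + 1) * χ₂ W) :=
        mul_nonneg (by linarith)
          (mul_nonneg (mul_nonneg (mul_nonneg hγ.le hpg1) hA1n) hA2n)
      have hP2 : 0 ≤ (2 * τ + Dτ) * (((-t) ^ γ * (-deriv χ₁ (t / T + 1) * (1 / T))) * χ₂ W) :=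
        mul_nonneg (by linarith)
          (mul_nonneg (mul_nonneg hpg (mul_nonneg (by linarith [hχ₁mono (t / T + 1)])
            (by positivity))) hA2n)
      have hP3 : 0 ≤ Dt * ((-t) ^ γ * χ₁ (t / T + 1) * (deriv χ₂ W * (1 / lamIn δ ν t)))
          - (2 * τ + Dτ) * ((-t) ^ γ * χ₁ (t / T + 1) * (deriv χ₂ W *
            ((τ - 1) * (δ * ν * (-t) ^ (-1 - ν)) / lamIn δ ν t ^ 2))) := by
        rcases eq_or_ne (deriv χ₂ W) 0 with h0 | h0
        · simp [h0]
        · have h1w : 1 ≤ |W| := by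
            by_contra h
            push_neg at h
            exact h0 (chi_deriv_zero_of_abs_lt_one χ₂ hχ₂one h)
          have hwmul : W * deriv χ₂ W ≤ 0 := hχ₂mono W
          have habs2 : |deriv χ₂ W| ≤ -(W * deriv χ₂ W) := by
            have e1 : -(W * deriv χ₂ W) = |W * deriv χ₂ W| := (abs_of_nonpos hwmul).symm
            rw [e1, abs_mul]
            have h := mul_le_mul_of_nonneg_right h1w (abs_nonneg (deriv χ₂ W))
            linarith
          have hDn : 0 ≤ δ * ν * (-t) ^ (-1 - ν) :=
            mul_nonneg (mul_nonneg hδ.le hν.le) hpν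
          have hG : 0 ≤ Dt * deriv χ₂ W
              + (2 * τ + Dτ) * (-(W * deriv χ₂ W)) * (δ * ν * (-t) ^ (-1 - ν)) := by
            have k1 : -(|Dt| * |deriv χ₂ W|) ≤ Dt * deriv χ₂ W := by
              rw [← abs_mul]; exact neg_abs_le _
            have k2 : |Dt| * |deriv χ₂ W| ≤ δ * ν * (-t) ^ (-1 - ν) * |deriv χ₂ W| :=
              mul_le_mul_of_nonneg_right hQt (abs_nonneg _)
            have k3 : δ * ν * (-t) ^ (-1 - ν) * |deriv χ₂ W|
                ≤ (2 * τ + Dτ) * (-(W * deriv χ₂ W)) * (δ * ν * (-t) ^ (-1 - ν)) := by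
              have k4 := mul_nonneg (mul_nonneg (sub_nonneg.mpr h2τ)
                (le_trans (abs_nonneg (deriv χ₂ W)) habs2)) hDn
              have k5 := mul_nonneg (sub_nonneg.mpr habs2) hDn
              linarith [k4, k5]
            linarith
          have hfact : Dt * ((-t) ^ γ * χ₁ (t / T + 1) * (deriv χ₂ W * (1 / lamIn δ ν t)))
              - (2 * τ + Dτ) * ((-t) ^ γ * χ₁ (t / T + 1) * (deriv χ₂ W *
                ((τ - 1) * (δ * ν * (-t) ^ (-1 - ν)) / lamIn δ ν t ^ 2)))
              = ((-t) ^ γ * χ₁ (t / T + 1) * (1 / lamIn δ ν t)) * (Dt * deriv χ₂ W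
                + (2 * τ + Dτ) * (-(W * deriv χ₂ W)) * (δ * ν * (-t) ^ (-1 - ν))) := by
            rw [hWdef]
            field_simp
            ring
          rw [hfact]
          exact mul_nonneg (mul_nonneg (mul_nonneg hpg hA1n) (by positivity)) hG
      have hsum : -((2 * τ + Dτ) *
            ((γ * (-t) ^ (γ - 1) * (-1) * χ₁ (t / T + 1)
                + (-t) ^ γ * (deriv χ₁ (t / T + 1) * (1 / T))) * χ₂ W
              + (-t) ^ γ * χ₁ (t / T + 1) * (deriv χ₂ W *
                ((τ - 1) * (δ * ν * (-t) ^ (-1 - ν)) / lamIn δ ν t ^ 2)))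
          - Dt * ((-t) ^ γ * χ₁ (t / T + 1) * (deriv χ₂ W * (1 / lamIn δ ν t))))
          = γ * (-t) ^ (γ - 1) * χ₁ (t / T + 1) * χ₂ W
            + ((2 * τ + Dτ - 1) * (γ * (-t) ^ (γ - 1) * χ₁ (t / T + 1) * χ₂ W)
              + (2 * τ + Dτ) * (((-t) ^ γ * (-deriv χ₁ (t / T + 1) * (1 / T))) * χ₂ W)
              + (Dt * ((-t) ^ γ * χ₁ (t / T + 1) * (deriv χ₂ W * (1 / lamIn δ ν t)))
                - (2 * τ + Dτ) * ((-t) ^ γ * χ₁ (t / T + 1) * (deriv χ₂ W *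
                  ((τ - 1) * (δ * ν * (-t) ^ (-1 - ν)) / lamIn δ ν t ^ 2))))) := by ring
      rw [hsum]
      exact le_add_of_nonneg_right (add_nonneg (add_nonneg hP1 hP2) hP3)
end
end

section
/- Let H be a complex Hilbert space, D ⊆ H a subspace, and P : D → H a linear map that is symmetric on D (⟨Pφ, φ′⟩ = ⟨φ, Pφ′⟩ for all φ, φ′ ∈ D). Let B, B̃, E be bounded linear operators on H, let W be a bounded self-adjoint operator on H, and let a, c′ > 0. Assume that for every φ ∈ D: −2 Im⟨Bφ, B(Pφ)⟩ ≥ a‖WBφ‖² − c′‖WB̃φ‖² − ‖Eφ‖². Then for every z ∈ ℂ with Im z > 0, every φ ∈ D, and every η ∈ H with Wη = B(Pφ − zφ), one has (a/2)‖WBφ‖² + 2(Im z)‖Bφ‖² ≤ (2/a)‖η‖² + c′‖WB̃φ‖² + ‖Eφ‖². -/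
/-!
Since `B (P φ) = W η + z • B φ` and `W` is self-adjoint,
`Im ⟪B φ, B (P φ)⟫ = Im ⟪W B φ, η⟫ + Im z * ‖B φ‖²`. Cauchy–Schwarz and the weighted AM–GM
inequality `2 x y ≤ (a/2) x² + (2/a) y²` then absorb half of the term `a ‖W B φ‖²` of the
commutator bound.
-/

open scoped ComplexInnerProductSpace

theorem two_mul_mul_le_half_mul_sq_add_div_mul_sq {a : ℝ} (ha : 0 < a) (x y : ℝ) :
    2 * (x * y) ≤ a / 2 * x ^ 2 + 2 / a * y ^ 2 := by
  have key : a / 2 * x ^ 2 + 2 / a * y ^ 2 - 2 * (x * y) = a / 2 * (x - 2 / a * y) ^ 2 := by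
    field_simp
    ring
  rw [← sub_nonneg, key]
  positivity

theorem im_inner_eq_of_apply_eq_sub_smul {H : Type*} [NormedAddCommGroup H]
    [InnerProductSpace ℂ H] [CompleteSpace H] {W : H →L[ℂ] H} (hW : IsSelfAdjoint W)
    {u v η : H} {z : ℂ} (hη : W η = v - z • u) :
    (⟪u, v⟫).im = (⟪W u, η⟫).im + z.im * ‖u‖ ^ 2 := by
  have hv : v = W η + z • u := by rw [hη, sub_add_cancel]
  have hsym : ⟪W u, η⟫ = ⟪u, W η⟫ := hW.isSymmetric u η
  rw [hv, inner_add_right, inner_smul_right, ← hsym, inner_self_eq_norm_sq_to_K]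
  simp [← Complex.ofReal_pow]

theorem stmt15_general (H : Type*) [NormedAddCommGroup H] [InnerProductSpace ℂ H] [CompleteSpace H]
    (D : Submodule ℂ H) (P : D →ₗ[ℂ] H)
    (B Bt E W : H →L[ℂ] H) (hW : IsSelfAdjoint W)
    (a c' : ℝ) (ha : 0 < a)
    (hcomm : ∀ φ : D,
      a * ‖W (B (φ : H))‖ ^ 2 - c' * ‖W (Bt (φ : H))‖ ^ 2 - ‖E (φ : H)‖ ^ 2
        ≤ -2 * (⟪B (φ : H), B (P φ)⟫).im) :
    ∀ z : ℂ, 0 < z.im → ∀ φ : D, ∀ η : H, W η = B (P φ - z • (φ : H)) →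
      a / 2 * ‖W (B (φ : H))‖ ^ 2 + 2 * z.im * ‖B (φ : H)‖ ^ 2
        ≤ 2 / a * ‖η‖ ^ 2 + c' * ‖W (Bt (φ : H))‖ ^ 2 + ‖E (φ : H)‖ ^ 2 := by
  intro z _ φ η hη
  have him := im_inner_eq_of_apply_eq_sub_smul hW (hη.trans (by rw [map_sub, map_smul]))
  have hCS : -(⟪W (B (φ : H)), η⟫).im ≤ ‖W (B (φ : H))‖ * ‖η‖ :=
    (neg_le_abs _).trans ((Complex.abs_im_le_norm _).trans (norm_inner_le_norm _ _))
  have hAM := two_mul_mul_le_half_mul_sq_add_div_mul_sq ha ‖W (B (φ : H))‖ ‖η‖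
  linarith [hcomm φ]

/-- abstract form of the key commutator estimate (2.4) of the paper: if the
positive commutator bound `−2 Im⟪Bφ, BPφ⟫ ≥ a‖WBφ‖² − c′‖WB̃φ‖² − ‖Eφ‖²` holds for the
symmetric operator `P` on the subspace `D`, then for `Im z > 0`, `φ ∈ D` and `η` with
`Wη = B(Pφ − zφ)` one has
`(a/2)‖WBφ‖² + 2(Im z)‖Bφ‖² ≤ (2/a)‖η‖² + c′‖WB̃φ‖² + ‖Eφ‖²`. -/
theorem stmt15 (H : Type*) [NormedAddCommGroup H] [InnerProductSpace ℂ H] [CompleteSpace H]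
    (D : Submodule ℂ H) (P : D →ₗ[ℂ] H)
    (hP : ∀ φ φ' : D, ⟪P φ, (φ' : H)⟫ = ⟪(φ : H), P φ'⟫)
    (B Bt E W : H →L[ℂ] H) (hW : IsSelfAdjoint W)
    (a c' : ℝ) (ha : 0 < a) (hc' : 0 < c')
    (hcomm : ∀ φ : D,
      a * ‖W (B (φ : H))‖ ^ 2 - c' * ‖W (Bt (φ : H))‖ ^ 2 - ‖E (φ : H)‖ ^ 2
        ≤ -2 * (⟪B (φ : H), B (P φ)⟫).im) :
    ∀ z : ℂ, 0 < z.im → ∀ φ : D, ∀ η : H, W η = B (P φ - z • (φ : H)) →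
      a / 2 * ‖W (B (φ : H))‖ ^ 2 + 2 * z.im * ‖B (φ : H)‖ ^ 2
        ≤ 2 / a * ‖η‖ ^ 2 + c' * ‖W (Bt (φ : H))‖ ^ 2 + ‖E (φ : H)‖ ^ 2 :=
  stmt15_general H D P B Bt E W hW a c' ha hcomm
end
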